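/- arXiv:0708.0213 — 3 statements merged into one kernel-verified Lean document; each statement's English description precedes it below -/
import Mathlib

section
/- Let n, m ≥ 1, let p be a prime, and let k ≥ 1 be such that p^k divides m but p^k does not divide n!. Let U be the representation of S_n on (ℂ^m)^{⊗n} permuting tensor factors. Then for every finite-dimensional irreducible complex representation ρ of S_n, the prime p divides the multiplicity of ρ in U, that is, p divides dim_ℂ Hom_{S_n}(ρ, (ℂ^m)^{⊗n}), the dimension of the space of S_n-equivariant linear maps from ρ to U. -/
/-!
In the basis of `(ℂ^m)^{⊗n}` indexed by colourings `f : Fin n → Fin m`, `U` permutes basis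
vectors, so the space of equivariant maps splits as a sum over the `S_n`-orbits of colourings.
Recolouring by `S_m` commutes with `S_n`, so the summands of two classes in the same `S_m`-orbit
are isomorphic and the multiplicity is a sum of `S_m`-orbit sizes times dimensions. A class whose
colourings use `r` colours, `1 ≤ r ≤ n`, is sent to its `r`-set of colours, on which `S_m` acts
transitively; so `C(m, r)` divides the size of its orbit. Finally `r · C(m, r) = m · C(m-1, r-1)`,
`p^k ∣ m` and `p^k ∤ r` (as `r ∣ n!`) force `p ∣ C(m, r)`.
-/

open scoped TensorProduct PiTensorProduct

noncomputable instance tensorPowerAddCommGroup (n m : ℕ) :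
    AddCommGroup (⨂[ℂ] _ : Fin n, (Fin m → ℂ)) :=
  PiTensorProduct.instAddCommGroup

def IsIrreducibleRep {G W : Type*} [Monoid G] [AddCommGroup W] [Module ℂ W]
    (ρ : G →* (W →ₗ[ℂ] W)) : Prop :=
  Nontrivial W ∧
    ∀ p : Submodule ℂ W, (∀ g : G, p.map (ρ g) ≤ p) → p = ⊥ ∨ p = ⊤

def equivariantMaps {G W T : Type*} [AddCommGroup W] [Module ℂ W]
    [AddCommGroup T] [Module ℂ T]
    (ρ : G → (W →ₗ[ℂ] W)) (U : G → (T →ₗ[ℂ] T)) : Submodule ℂ (W →ₗ[ℂ] T) where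
  carrier := {f | ∀ g : G, f ∘ₗ ρ g = U g ∘ₗ f}
  add_mem' := by
    intro a b ha hb g
    simp [LinearMap.add_comp, LinearMap.comp_add, ha g, hb g]
  zero_mem' := by intro g; simp
  smul_mem' := by
    intro c x hx g
    simp [LinearMap.smul_comp, LinearMap.comp_smul, hx g]

open Module Equiv MulAction

section EquivariantMaps

variable {G W T T' : Type*} [AddCommGroup W] [Module ℂ W] [AddCommGroup T] [Module ℂ T]
  [AddCommGroup T'] [Module ℂ T'] {ρ : G → W →ₗ[ℂ] W}

theorem comp_mem_equivariantMaps {U : G → T →ₗ[ℂ] T} {U' : G → T' →ₗ[ℂ] T'} (e : T →ₗ[ℂ] T')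
    (he : ∀ g, e ∘ₗ U g = U' g ∘ₗ e) {φ : W →ₗ[ℂ] T} (hφ : φ ∈ equivariantMaps ρ U) :
    e ∘ₗ φ ∈ equivariantMaps ρ U' := fun g => by
  rw [LinearMap.comp_assoc, hφ g, ← LinearMap.comp_assoc, he, LinearMap.comp_assoc]

def equivariantMapsCongr {U : G → T →ₗ[ℂ] T} {U' : G → T' →ₗ[ℂ] T'} (e : T ≃ₗ[ℂ] T')
    (he : ∀ g, e.toLinearMap ∘ₗ U g = U' g ∘ₗ e.toLinearMap) :
    equivariantMaps ρ U ≃ₗ[ℂ] equivariantMaps ρ U' :=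
  have he' : ∀ g, e.symm.toLinearMap ∘ₗ U' g = U g ∘ₗ e.symm.toLinearMap := fun g => by
    ext t
    apply e.injective
    simpa using (LinearMap.congr_fun (he g) (e.symm t)).symm
  { toFun := fun φ => ⟨e.toLinearMap ∘ₗ φ, comp_mem_equivariantMaps _ he φ.2⟩
    invFun := fun ψ => ⟨e.symm.toLinearMap ∘ₗ ψ, comp_mem_equivariantMaps _ he' ψ.2⟩
    map_add' := fun _ _ => by ext; simp
    map_smul' := fun _ _ => by ext; simp
    left_inv := fun φ => by ext; simp
    right_inv := fun ψ => by ext; simp }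

def equivariantMapsPiEquiv {ι : Type*} {V : ι → Type*} [∀ i, AddCommGroup (V i)]
    [∀ i, Module ℂ (V i)] (U : ∀ i, G → V i →ₗ[ℂ] V i) :
    equivariantMaps ρ (fun g => LinearMap.piMap fun i => U i g) ≃ₗ[ℂ]
      ∀ i, equivariantMaps ρ (U i) where
  toFun φ i := ⟨LinearMap.proj i ∘ₗ φ.1,
    comp_mem_equivariantMaps (U' := U i) (LinearMap.proj i) (fun _ => rfl) φ.2⟩
  invFun ψ := ⟨LinearMap.pi fun i => (ψ i).1, fun g => by
    ext w i
    exact LinearMap.congr_fun ((ψ i).2 g) w⟩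
  map_add' _ _ := rfl
  map_smul' _ _ := rfl
  left_inv _ := rfl
  right_inv _ := rfl

end EquivariantMaps

section PermRep

variable {G W X Y Q : Type*} [AddCommGroup W] [Module ℂ W] {ρ : G → W →ₗ[ℂ] W}

abbrev permRep (a : G → X → X) (g : G) : (X → ℂ) →ₗ[ℂ] X → ℂ :=
  LinearMap.funLeft ℂ ℂ (a g)

def fiberMap (a : G → X → X) (κ : X → Q) (hκ : ∀ g x, κ (a g x) = κ x) (q : Q) (g : G) :
    {x // κ x = q} → {x // κ x = q} :=
  Subtype.map (a g) fun x hx => (hκ g x).trans hx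

theorem finrank_equivariantMaps_permRep_congr {a : G → X → X} {b : G → Y → Y} (σ : X ≃ Y)
    (hσ : ∀ g x, σ (a g x) = b g (σ x)) :
    finrank ℂ (equivariantMaps ρ (permRep a)) = finrank ℂ (equivariantMaps ρ (permRep b)) := by
  refine (equivariantMapsCongr (LinearEquiv.funCongrLeft ℂ ℂ σ.symm) fun g => ?_).finrank_eq
  ext c y
  obtain ⟨x, rfl⟩ := σ.surjective y
  simp [LinearEquiv.funCongrLeft, LinearMap.funLeft, ← hσ]

theorem finrank_equivariantMaps_permRep_eq_sum [FiniteDimensional ℂ W] [Finite X] [Fintype Q]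
    (a : G → X → X) (κ : X → Q) (hκ : ∀ g x, κ (a g x) = κ x) :
    finrank ℂ (equivariantMaps ρ (permRep a)) =
      ∑ q, finrank ℂ (equivariantMaps ρ (permRep (fiberMap a κ hκ q))) := by
  let e : (X → ℂ) ≃ₗ[ℂ] ∀ q, {x // κ x = q} → ℂ :=
    (LinearEquiv.funCongrLeft ℂ ℂ (Equiv.sigmaFiberEquiv κ)).trans
      (LinearEquiv.piCurry ℂ fun _ _ => ℂ)
  have he : ∀ g, e.toLinearMap ∘ₗ permRep a g =
      LinearMap.piMap (fun q => permRep (fiberMap a κ hκ q) g) ∘ₗ e.toLinearMap := fun g => by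
    ext c q x
    rfl
  rw [(equivariantMapsCongr e he).finrank_eq, (equivariantMapsPiEquiv _).finrank_eq,
    finrank_pi_fintype]

theorem finrank_equivariantMaps_fiberMap_smul {H : Type*} [Group H] [MulAction H X]
    [MulAction H Q] (a : G → X → X) (κ : X → Q)
    (hκ : ∀ g x, κ (a g x) = κ x) (hκH : ∀ (h : H) x, κ (h • x) = h • κ x)
    (ha : ∀ g (h : H) x, a g (h • x) = h • a g x) (h : H) (q : Q) :
    finrank ℂ (equivariantMaps ρ (permRep (fiberMap a κ hκ (h • q)))) =
      finrank ℂ (equivariantMaps ρ (permRep (fiberMap a κ hκ q))) := by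
  symm
  refine finrank_equivariantMaps_permRep_congr ((toPerm h).subtypeEquiv fun x => ?_)
    fun g x => Subtype.ext (ha g h x.1).symm
  rw [toPerm_apply, hκH, smul_left_cancel_iff]

end PermRep

theorem finrank_equivariantMaps_piTensorProduct {ι α W : Type*} [Fintype ι] [DecidableEq ι]
    [Fintype α] [DecidableEq α] [AddCommGroup W] [Module ℂ W] (ρ : Perm ι → W →ₗ[ℂ] W)
    (U : Perm ι → (⨂[ℂ] _ : ι, (α → ℂ)) →ₗ[ℂ] ⨂[ℂ] _ : ι, (α → ℂ))
    (hU : ∀ g (ξ : ι → α → ℂ), U g (PiTensorProduct.tprod ℂ ξ) =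
      PiTensorProduct.tprod ℂ fun i => ξ (g i)) :
    finrank ℂ (equivariantMaps ρ U) =
      finrank ℂ (equivariantMaps ρ (permRep fun g (f : ι → α) => f ∘ ⇑g⁻¹)) := by
  let b := Basis.piTensorProduct fun _ : ι => Pi.basisFun ℂ α
  have hb : ∀ g h, U g (b h) = b (h ∘ ⇑g) := fun g h => by
    simp only [b, Basis.piTensorProduct_apply, hU]
    rfl
  refine (equivariantMapsCongr b.equivFun fun g => b.ext fun h => ?_).finrank_eq
  ext f
  simp [hb, Finsupp.single_apply, Equiv.eq_comp_symm]

namespace MulAction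

variable {G H X : Type*} [Group G] [Monoid H] [MulAction G X] [MulAction H X]
  [SMulCommClass H G X]

instance orbitRelQuotientMulAction : MulAction H (orbitRel.Quotient G X) where
  smul h := Quotient.map (h • ·) fun _ y ⟨g, hg⟩ => ⟨g, by rw [← hg, smul_comm]⟩
  one_smul q := Quotient.inductionOn q fun x => congrArg Quotient.mk'' (one_smul H x)
  mul_smul h h' q := Quotient.inductionOn q fun x => congrArg Quotient.mk'' (mul_smul h h' x)

end MulAction

theorem dvd_sum_of_dvd_ncard_orbit {H Q : Type*} [Group H] [MulAction H Q] [Fintype Q] {p : ℕ}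
    (d : Q → ℕ) (hd : ∀ (h : H) q, d (h • q) = d q)
    (hp : ∀ q : Q, p ∣ (orbit H q).ncard) : p ∣ ∑ q, d q := by
  classical
  rw [← (selfEquivSigmaOrbits H Q).symm.sum_comp, Fintype.sum_sigma]
  refine Finset.dvd_sum fun ω _ => ?_
  have hconst : ∀ x : orbit H ω.out, d x = d ω.out := by
    rintro ⟨_, h, rfl⟩
    exact hd h _
  change p ∣ ∑ x : orbit H ω.out, d x
  rw [Fintype.sum_congr _ _ hconst, Finset.sum_const, Finset.card_univ, smul_eq_mul,
    ← Nat.card_eq_fintype_card, Nat.card_coe_set_eq]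
  exact (hp _).mul_right _

theorem Nat.Prime.dvd_choose_of_pow_dvd {p k m r : ℕ} (hp : p.Prime) (hm : p ^ k ∣ m)
    (hr : ¬ p ^ k ∣ r) : p ∣ m.choose r := by
  obtain _ | r := r
  · simp at hr
  obtain _ | m := m
  · simp
  by_contra hpc
  have hmul : p ^ k ∣ (m + 1).choose (r + 1) * (r + 1) := by
    rw [← Nat.add_one_mul_choose_eq]
    exact hm.mul_right _
  exact hr ((Nat.Coprime.pow_left k ((hp.coprime_iff_not_dvd).2 hpc)).dvd_of_dvd_mul_left hmul)

open scoped Pointwise in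
theorem choose_card_image_dvd_ncard_orbit {ι α : Type*} [Fintype ι] [Fintype α] [DecidableEq α]
    (f : ι → α) :
    (Fintype.card α).choose (Finset.univ.image f).card ∣
      (orbit (Perm α) (Quotient.mk'' f : orbitRel.Quotient (Perm ι)ᵈᵐᵃ (ι → α))).ncard := by
  let s : Set.powersetCard α (Finset.univ.image f).card := ⟨Finset.univ.image f, rfl⟩
  have := Set.powersetCard.isPretransitive (α := α) (n := (Finset.univ.image f).card)
  have hstab : stabilizer (Perm α) (Quotient.mk'' f : orbitRel.Quotient (Perm ι)ᵈᵐᵃ (ι → α)) ≤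
      stabilizer (Perm α) s := by
    intro π hπ
    obtain ⟨c, hc : c • f = π • f⟩ : π • f ∈ orbit (Perm ι)ᵈᵐᵃ f := Quotient.exact hπ
    rw [mem_stabilizer_iff, Subtype.ext_iff, Set.powersetCard.coe_smul]
    calc π • Finset.univ.image f = Finset.univ.image (c • f) := by
          rw [hc, Finset.smul_finset_def, Finset.image_image]; rfl
      _ = Finset.univ.image f := by
          ext a
          simp only [Finset.mem_image, Finset.mem_univ, true_and, DomMulAct.smul_apply]
          exact ((DomMulAct.mk.symm c).surjective.exists (p := fun i => f i = a)).symm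
  calc (Fintype.card α).choose (Finset.univ.image f).card = (stabilizer (Perm α) s).index := by
        rw [index_stabilizer_of_transitive, Set.powersetCard.card, Nat.card_eq_fintype_card]
    _ ∣ _ := Subgroup.index_dvd_of_le hstab
    _ = _ := index_stabilizer _ _

theorem dvd_ncard_orbit_of_pow_dvd {ι α : Type*} [Fintype ι] [Nonempty ι] [Fintype α]
    {p k : ℕ} (hp : p.Prime) (hα : p ^ k ∣ Fintype.card α)
    (hι : ¬ p ^ k ∣ (Fintype.card ι).factorial) (q : orbitRel.Quotient (Perm ι)ᵈᵐᵃ (ι → α)) :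
    p ∣ (orbit (Perm α) q).ncard := by
  classical
  induction q using Quotient.inductionOn' with | h f => ?_
  have hpos : 0 < (Finset.univ.image f).card := by simp
  have hle : (Finset.univ.image f).card ≤ Fintype.card ι := Finset.card_image_le
  exact (hp.dvd_choose_of_pow_dvd hα fun h => hι (h.trans (Nat.dvd_factorial hpos hle))).trans
    (choose_card_image_dvd_ncard_orbit f)

theorem prime_dvd_multiplicity_general (n m p k : ℕ) (hn : 1 ≤ n)
    (hp : p.Prime) (hdvd : p ^ k ∣ m) (hndvd : ¬ (p ^ k ∣ Nat.factorial n))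
    (U : Equiv.Perm (Fin n) →
      ((⨂[ℂ] _ : Fin n, (Fin m → ℂ)) →ₗ[ℂ] ⨂[ℂ] _ : Fin n, (Fin m → ℂ)))
    (hU : ∀ (g : Equiv.Perm (Fin n)) (ξ : Fin n → (Fin m → ℂ)),
      U g (PiTensorProduct.tprod ℂ ξ) = PiTensorProduct.tprod ℂ (fun i => ξ (g i)))
    (W : Type*) [AddCommGroup W] [Module ℂ W] [FiniteDimensional ℂ W]
    (ρ : Equiv.Perm (Fin n) →* (W →ₗ[ℂ] W)) :
    p ∣ Module.finrank ℂ (equivariantMaps (fun g => ρ g) U) := by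
  classical
  have : Nonempty (Fin n) := Fin.pos_iff_nonempty.1 hn
  let κ : (Fin n → Fin m) → orbitRel.Quotient (Perm (Fin n))ᵈᵐᵃ (Fin n → Fin m) := Quotient.mk''
  have hκ : ∀ (g : Perm (Fin n)) f, κ (f ∘ ⇑g⁻¹) = κ f := fun g f =>
    Quotient.sound ⟨DomMulAct.mk g⁻¹, rfl⟩
  rw [finrank_equivariantMaps_piTensorProduct _ U hU,
    finrank_equivariantMaps_permRep_eq_sum _ κ hκ]
  refine dvd_sum_of_dvd_ncard_orbit (H := Perm (Fin m)) _
    (finrank_equivariantMaps_fiberMap_smul _ κ hκ (fun _ _ => rfl) fun _ _ _ => rfl) ?_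
  exact dvd_ncard_orbit_of_pow_dvd hp (by simpa using hdvd) (by simpa using hndvd)

/-- Let `n, m ≥ 1`, `p` prime and `k ≥ 1` with `p^k ∣ m` and `p^k ∤ n!`.
Let `U` be the representation of `S_n` on `(ℂ^m)^{⊗n}` permuting tensor factors:
`U_g (ξ_1 ⊗ ⋯ ⊗ ξ_n) = ξ_{g(1)} ⊗ ⋯ ⊗ ξ_{g(n)}`. Then for every finite-dimensional
irreducible complex representation `ρ` of `S_n`, the prime `p` divides the multiplicity
of `ρ` in `U`, i.e. the dimension of the space of `S_n`-equivariant linear maps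
from `ρ` to `U`. -/
theorem prime_dvd_multiplicity (n m p k : ℕ) (hn : 1 ≤ n) (hm : 1 ≤ m)
    (hp : p.Prime) (hk : 1 ≤ k) (hdvd : p ^ k ∣ m) (hndvd : ¬ (p ^ k ∣ Nat.factorial n))
    (U : Equiv.Perm (Fin n) →
      ((⨂[ℂ] _ : Fin n, (Fin m → ℂ)) →ₗ[ℂ] ⨂[ℂ] _ : Fin n, (Fin m → ℂ)))
    (hU : ∀ (g : Equiv.Perm (Fin n)) (ξ : Fin n → (Fin m → ℂ)),
      U g (PiTensorProduct.tprod ℂ ξ) = PiTensorProduct.tprod ℂ (fun i => ξ (g i)))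
    (W : Type*) [AddCommGroup W] [Module ℂ W] [FiniteDimensional ℂ W]
    (ρ : Equiv.Perm (Fin n) →* (W →ₗ[ℂ] W)) (hρ : IsIrreducibleRep ρ) :
    p ∣ Module.finrank ℂ (equivariantMaps (fun g => ρ g) U) :=
  prime_dvd_multiplicity_general n m p k hn hp hdvd hndvd U hU W ρ
end

section
/- Let n ≥ 1 and let p be a prime with p > n. Consider the n-fold tensor power M_p(ℂ)^{⊗n} over ℂ of the p×p complex matrix algebra, with the action of the symmetric group S_n by ℂ-algebra automorphisms permuting the tensor factors: α_g(a_1 ⊗ a_2 ⊗ ··· ⊗ a_n) = a_{g(1)} ⊗ a_{g(2)} ⊗ ··· ⊗ a_{g(n)}. Then there exists an injective unital ℂ-algebra homomorphism from M_p(ℂ) into the fixed-point subalgebra (M_p(ℂ)^{⊗n})^{S_n} = {x ∈ M_p(ℂ)^{⊗n} : α_g(x) = x for all g ∈ S_n}. -/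
/-!
Fix a primitive additive character `ψ` of `R = ℤ/p`. The Weyl (clock-and-shift) matrices
`W(a, b)ᵢⱼ = [i = j + a] ψ(b j)` form a basis of `M_p(ℂ)` and multiply projectively,
`W(a, b) W(c, d) = ψ(b c) W(a + c, b + d)`. Taking `n`-th tensor powers raises the cocycle
to `ψ(b c)ⁿ = ψ(n b c)`, which is compensated by rescaling the second index by `k = n⁻¹ mod p`
(it exists since `0 < n < p`, `p` prime). Hence `W(a, b) ↦ W(a, k b)^{⊗n}` extends linearly
to a unital algebra map; its values on the basis are symmetric elementary tensors, so its image
is `S_n`-invariant, and it is injective because `M_p(ℂ)` is simple.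
-/

open scoped TensorProduct PiTensorProduct

theorem LinearMap.map_mul_of_map_mul_basis {K A B ι : Type*} [CommSemiring K] [Semiring A]
    [Semiring B] [Algebra K A] [Algebra K B] (b : Module.Basis ι K A) (f : A →ₗ[K] B)
    (h : ∀ i j, f (b i * b j) = f (b i) * f (b j)) (x y : A) : f (x * y) = f x * f y :=
  (LinearMap.map_mul_iff f).2 (b.ext fun i => b.ext fun j => h i j) x y

theorem AddChar.IsPrimitive.compRingEquiv {R S M : Type*} [CommRing R] [CommRing S]
    [CommMonoid M] {ψ : AddChar S M} (hψ : ψ.IsPrimitive) (e : R ≃+* S) :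
    (ψ.compAddMonoidHom e.toAddMonoidHom).IsPrimitive := by
  intro a ha h
  refine hψ (e.map_ne_zero_iff.2 ha) ?_
  ext y
  obtain ⟨x, rfl⟩ := e.surjective y
  simpa [← map_mul] using DFunLike.congr_fun h x

section WeylMatrix

variable {K R : Type*} [CommRing K] [CommRing R] [DecidableEq R] (ψ : AddChar R K)

def weylMatrix (a b : R) : Matrix R R K :=
  Matrix.of fun i j => if i = j + a then ψ (b * j) else 0

theorem weylMatrix_zero_zero : weylMatrix ψ 0 0 = 1 := by
  ext i j
  simp [weylMatrix, Matrix.one_apply]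

variable [Fintype R]

theorem weylMatrix_mul (a b c d : R) :
    weylMatrix ψ a b * weylMatrix ψ c d = ψ (b * c) • weylMatrix ψ (a + c) (b + d) := by
  ext i j
  have hψ : ψ (b * (j + c)) * ψ (d * j) = ψ (b * c) * ψ ((b + d) * j) := by
    rw [← AddChar.map_add_eq_mul, ← AddChar.map_add_eq_mul]
    ring_nf
  simp [weylMatrix, Matrix.mul_apply, ← add_assoc, add_right_comm _ c a, hψ]

end WeylMatrix

section WeylBasis

variable {K R : Type*} [Field K] [CommRing R] [Fintype R] [DecidableEq R] (ψ : AddChar R K)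

theorem sum_mul_weylMatrix_apply (hψ : ψ.IsPrimitive) (a b a₀ b₀ : R) :
    ∑ j, ψ (-(b₀ * j)) * weylMatrix ψ a b (j + a₀) j =
      if (a, b) = (a₀, b₀) then (Fintype.card R : K) else 0 := by
  by_cases ha : a = a₀
  · subst ha
    have h : ∀ j, ψ (-(b₀ * j)) * ψ (b * j) = ψ (j * (b - b₀)) := fun j => by
      rw [← AddChar.map_add_eq_mul]
      ring_nf
    simp [weylMatrix, h, AddChar.sum_mulShift _ hψ, sub_eq_zero]
  · simp [weylMatrix, Ne.symm ha, ha]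

theorem linearIndependent_weylMatrix (hψ : ψ.IsPrimitive) (hR : (Fintype.card R : K) ≠ 0) :
    LinearIndependent K fun ab : R × R => weylMatrix ψ ab.1 ab.2 := by
  refine Fintype.linearIndependent_iff.2 fun g hg ⟨a₀, b₀⟩ => ?_
  have h := congr_arg (fun M => ∑ j, ψ (-(b₀ * j)) * M (j + a₀) j) hg
  simp only [Matrix.sum_apply, Matrix.smul_apply, smul_eq_mul, Matrix.zero_apply, mul_zero,
    Finset.sum_const_zero, Finset.mul_sum] at h
  rw [Finset.sum_comm] at h
  simp only [mul_left_comm _ (g _), ← Finset.mul_sum, sum_mul_weylMatrix_apply ψ hψ] at h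
  simpa [hR] using h

variable {ψ} in
noncomputable def weylBasis (hψ : ψ.IsPrimitive) (hR : (Fintype.card R : K) ≠ 0) :
    Module.Basis (R × R) K (Matrix R R K) :=
  basisOfLinearIndependentOfCardEqFinrank (linearIndependent_weylMatrix ψ hψ hR)
    (by simp [Module.finrank_matrix, Fintype.card_prod])

theorem weylBasis_apply (hψ : ψ.IsPrimitive) (hR : (Fintype.card R : K) ≠ 0) (ab : R × R) :
    weylBasis hψ hR ab = weylMatrix ψ ab.1 ab.2 :=
  congr_fun (coe_basisOfLinearIndependentOfCardEqFinrank _ _) ab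

end WeylBasis

section WeylDiag

variable {K R ι : Type*} [Field K] [CommRing R] [Fintype R] [DecidableEq R]
  {ψ : AddChar R K} {k : R}

variable (ι k) in
noncomputable def weylDiagLinear (hψ : ψ.IsPrimitive) (hR : (Fintype.card R : K) ≠ 0) :
    Matrix R R K →ₗ[K] ⨂[K] _ : ι, Matrix R R K :=
  (weylBasis hψ hR).constr K fun ab => ⨂ₜ[K] _ : ι, weylMatrix ψ ab.1 (k * ab.2)

variable (hψ : ψ.IsPrimitive) (hR : (Fintype.card R : K) ≠ 0)

theorem weylDiagLinear_weylMatrix (a b : R) :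
    weylDiagLinear ι k hψ hR (weylMatrix ψ a b) = ⨂ₜ[K] _ : ι, weylMatrix ψ a (k * b) := by
  have h := (weylBasis hψ hR).constr_basis K
    (fun ab : R × R => ⨂ₜ[K] _ : ι, weylMatrix ψ ab.1 (k * ab.2)) (a, b)
  rwa [weylBasis_apply] at h

variable [Fintype ι]

theorem tprod_weylMatrix_mul (hk : (Fintype.card ι : R) * k = 1) (a b c d : R) :
    (⨂ₜ[K] _ : ι, weylMatrix ψ a (k * b)) * (⨂ₜ[K] _ : ι, weylMatrix ψ c (k * d)) =
      ψ (b * c) • ⨂ₜ[K] _ : ι, weylMatrix ψ (a + c) (k * (b + d)) := by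
  have hpow : ψ (k * b * c) ^ Fintype.card ι = ψ (b * c) := by
    rw [← AddChar.map_nsmul_eq_pow, nsmul_eq_mul, ← mul_assoc, ← mul_assoc, hk, one_mul]
  rw [PiTensorProduct.tprod_mul_tprod]
  simp only [Pi.mul_def, weylMatrix_mul, mul_add]
  rw [MultilinearMap.map_smul_univ, Finset.prod_const, Finset.card_univ, hpow]

variable (ι) in
noncomputable def weylDiag (hk : (Fintype.card ι : R) * k = 1) :
    Matrix R R K →ₐ[K] ⨂[K] _ : ι, Matrix R R K :=
  AlgHom.ofLinearMap (weylDiagLinear ι k hψ hR)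
    (by
      rw [← weylMatrix_zero_zero ψ, weylDiagLinear_weylMatrix, mul_zero, weylMatrix_zero_zero]
      rfl)
    ((weylDiagLinear ι k hψ hR).map_mul_of_map_mul_basis (weylBasis hψ hR) fun ab cd => by
      simp only [weylBasis_apply, weylMatrix_mul, map_smul, weylDiagLinear_weylMatrix,
        tprod_weylMatrix_mul hk])

variable (hk : (Fintype.card ι : R) * k = 1)

theorem weylDiag_weylMatrix (a b : R) :
    weylDiag ι hψ hR hk (weylMatrix ψ a b) = ⨂ₜ[K] _ : ι, weylMatrix ψ a (k * b) :=
  weylDiagLinear_weylMatrix hψ hR a b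

theorem weylDiag_injective : Function.Injective (weylDiag ι hψ hR hk) := by
  have : Nontrivial (⨂[K] _ : ι, Matrix R R K) := by
    refine nontrivial_of_ne (⨂ₜ[K] _ : ι, (1 : Matrix R R K)) 0 ?_
    simpa [Basis.piTensorProduct_apply, weylBasis_apply, weylMatrix_zero_zero] using
      (Basis.piTensorProduct fun _ : ι => weylBasis hψ hR).ne_zero fun _ => (0, 0)
  exact RingHom.injective (weylDiag ι hψ hR hk).toRingHom

theorem map_weylDiag_of_map_tprod_const
    (T : (⨂[K] _ : ι, Matrix R R K) →ₗ[K] ⨂[K] _ : ι, Matrix R R K)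
    (hT : ∀ m : Matrix R R K, T (⨂ₜ[K] _ : ι, m) = ⨂ₜ[K] _ : ι, m) (x : Matrix R R K) :
    T (weylDiag ι hψ hR hk x) = weylDiag ι hψ hR hk x := by
  have hTφ : T ∘ₗ (weylDiag ι hψ hR hk).toLinearMap = (weylDiag ι hψ hR hk).toLinearMap :=
    (weylBasis hψ hR).ext fun ab => by
      simp [weylBasis_apply, weylDiag_weylMatrix, hT]
  exact LinearMap.congr_fun hTφ x

end WeylDiag

/-- Let `n ≥ 1` and `p` a prime with `p > n`. Consider the `n`-fold tensor
power `M_p(ℂ)^{⊗ n}` with the action `α` of `S_n` by `ℂ`-algebra automorphisms permuting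
the tensor factors, `α_g (a_1 ⊗ ⋯ ⊗ a_n) = a_{g(1)} ⊗ ⋯ ⊗ a_{g(n)}`. Then there is an
injective unital `ℂ`-algebra homomorphism from `M_p(ℂ)` into the fixed-point subalgebra
`(M_p(ℂ)^{⊗n})^{S_n}`, i.e. with range consisting of elements fixed by every `α_g`. -/
theorem matrix_embeds_into_fixed_points (n p : ℕ) (hn : 1 ≤ n) (hp : p.Prime)
    (hpn : n < p)
    (α : Equiv.Perm (Fin n) →
      ((⨂[ℂ] _ : Fin n, Matrix (Fin p) (Fin p) ℂ) ≃ₐ[ℂ]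
        ⨂[ℂ] _ : Fin n, Matrix (Fin p) (Fin p) ℂ))
    (hα : ∀ (g : Equiv.Perm (Fin n)) (a : Fin n → Matrix (Fin p) (Fin p) ℂ),
      α g (PiTensorProduct.tprod ℂ a) = PiTensorProduct.tprod ℂ (fun i => a (g i))) :
    ∃ φ : Matrix (Fin p) (Fin p) ℂ →ₐ[ℂ] ⨂[ℂ] _ : Fin n, Matrix (Fin p) (Fin p) ℂ,
      Function.Injective φ ∧
        ∀ (g : Equiv.Perm (Fin n)) (x : Matrix (Fin p) (Fin p) ℂ),
          α g (φ x) = φ x := by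
  have : NeZero p := ⟨hp.ne_zero⟩
  have : Fact p.Prime := ⟨hp⟩
  open Fin.CommRing in
  · let e : Fin p ≃+* ZMod p := ZMod.finEquiv p
    have hψ := (ZMod.isPrimitive_stdAddChar p).compRingEquiv e
    have hR : (Fintype.card (Fin p) : ℂ) ≠ 0 := by simp [hp.ne_zero]
    have hn₀ : (n : ZMod p) ≠ 0 := by
      rw [Ne, ZMod.natCast_eq_zero_iff]
      exact Nat.not_dvd_of_pos_of_lt hn hpn
    have hk : (Fintype.card (Fin n) : Fin p) * e.symm (n : ZMod p)⁻¹ = 1 := by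
      rw [Fintype.card_fin, ← map_natCast e.symm, ← map_mul, mul_inv_cancel₀ hn₀, map_one]
    exact ⟨weylDiag (Fin n) hψ hR hk, weylDiag_injective hψ hR hk, fun g =>
      map_weylDiag_of_map_tprod_const hψ hR hk (α g).toLinearMap fun m => hα g _⟩
end

section
/- Let I be a nonempty finite index set, let d : I → ℕ satisfy d_i ≥ 2 for all i ∈ I, and let D = Π_{i ∈ I} M_{d_i}(ℂ) be the corresponding finite direct sum of complex matrix algebras. Then for any coprime integers p, q ≥ 2 there exists m ≥ 1 and an injective unital ℂ-algebra homomorphism from M_p(ℂ) × M_q(ℂ) into the m-fold tensor power D^{⊗m} over ℂ. -/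
open scoped TensorProduct PiTensorProduct

/-!
The tensor power `D^{⊗m}` of `D = Π i, M_{d i}(ℂ)` is again a product of full matrix algebras,
one for each `f : Fin m → I`, of size `N_f = ∏ k, d (f k) ≥ 2^m`. Taking `m = pq + 1`, every
`N_f` exceeds `pq`, so by the Chicken McNugget theorem `N_f = p a + q b` with `a, b ≥ 1`, and
`(X, Y) ↦ diag(X, …, X, Y, …, Y)` embeds `M_p × M_q` unitally into `M_{N_f}`.
-/

theorem Nat.exists_eq_mul_succ_add_mul_succ_of_mul_lt {p q N : ℕ} (hpq : p.Coprime q)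
    (hN : p * q < N) : ∃ a b : ℕ, N = p * (a + 1) + q * (b + 1) := by
  have hle : p.pred * q.pred + p + q ≤ N := by
    rcases p with _ | p
    · simpa [(Nat.coprime_zero_left _).mp hpq] using Nat.succ_le_of_lt hN
    rcases q with _ | q
    · simpa [(Nat.coprime_zero_right _).mp hpq] using Nat.succ_le_of_lt hN
    simp only [Nat.pred_succ]
    linarith
  obtain ⟨a, b, h⟩ := Nat.exists_add_mul_eq_of_gcd_dvd_of_mul_pred_le p q (N - p - q)
    (by simp [hpq.gcd_eq_one]) (by omega)
  exact ⟨a, b, by grind⟩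

def Equiv.piSigmaEquivSigmaPi {ι I : Type*} (β : I → Type*) :
    (ι → Σ i, β i) ≃ Σ f : ι → I, Π k, β (f k) where
  toFun x := ⟨fun k => (x k).1, fun k => (x k).2⟩
  invFun y k := ⟨y.1 k, y.2 k⟩

namespace Matrix

theorem stdBasis_apply (R : Type*) [Semiring R] {m n : Type*} [Fintype m] [Finite n]
    [DecidableEq m] [DecidableEq n] (x : m × n) :
    stdBasis R m n x = single x.1 x.2 1 :=
  stdBasis_eq_single R x.1 x.2

section FromBlocks

variable (R : Type*) [CommSemiring R] {A : Type*} [Semiring A] [Algebra R A]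
  (l n : Type*) [Fintype l] [Fintype n] [DecidableEq l] [DecidableEq n]

noncomputable def fromBlocksAlgHom :
    Matrix l l A × Matrix n n A →ₐ[R] Matrix (l ⊕ n) (l ⊕ n) A where
  toFun X := fromBlocks X.1 0 0 X.2
  map_one' := fromBlocks_one
  map_mul' X Y := by simp [fromBlocks_multiply]
  map_zero' := fromBlocks_zero
  map_add' X Y := by simp [fromBlocks_add]
  commutes' r := by simp [algebraMap_eq_diagonal, fromBlocks_diagonal]

variable {R l n}

theorem fromBlocksAlgHom_injective : Function.Injective (fromBlocksAlgHom R (A := A) l n) :=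
  fun _ _ h =>
    have ⟨h₁, _, _, h₂⟩ := fromBlocks_inj.mp h
    Prod.ext h₁ h₂

end FromBlocks

variable {R : Type*} [CommSemiring R]

noncomputable def kroneckerOneAlgHom (l α : Type*) [Fintype l] [Fintype α] [DecidableEq l]
    [DecidableEq α] : Matrix l l R →ₐ[R] Matrix (l × α) (l × α) R :=
  (kroneckerAlgEquiv l α R).toAlgHom.comp Algebra.TensorProduct.includeLeft

theorem kroneckerOneAlgHom_injective {l α : Type*} [Fintype l] [Fintype α] [DecidableEq l]
    [DecidableEq α] [Nonempty α] : Function.Injective (kroneckerOneAlgHom (R := R) l α) := by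
  intro X Y h
  obtain ⟨c⟩ := ‹Nonempty α›
  ext i j
  simpa [kroneckerOneAlgHom] using congr_fun₂ h (i, c) (j, c)

theorem exists_injective_algHom_prod_of_mul_lt_card {p q : ℕ} (hpq : p.Coprime q)
    {κ : Type*} [Fintype κ] [DecidableEq κ] (hκ : p * q < Fintype.card κ) :
    ∃ φ : Matrix (Fin p) (Fin p) R × Matrix (Fin q) (Fin q) R →ₐ[R] Matrix κ κ R,
      Function.Injective φ := by
  obtain ⟨a, b, hab⟩ := Nat.exists_eq_mul_succ_add_mul_succ_of_mul_lt hpq hκ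
  let e : Fin p × Fin (a + 1) ⊕ Fin q × Fin (b + 1) ≃ κ :=
    Fintype.equivOfCardEq (by simp [hab])
  exact ⟨(reindexAlgEquiv R R e).toAlgHom.comp <| (fromBlocksAlgHom R _ _).comp <|
      (kroneckerOneAlgHom _ _).prodMap (kroneckerOneAlgHom _ _),
    (reindexAlgEquiv R R e).injective.comp <| (fromBlocksAlgHom_injective (R := R)).comp <|
      kroneckerOneAlgHom_injective.prodMap kroneckerOneAlgHom_injective⟩

end Matrix

namespace PiTensorProduct

variable (R : Type*) [CommSemiring R] (ι : Type*) [Fintype ι] {I : Type*} (n : I → Type*)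

noncomputable def piMatrixMultilinearMap :
    MultilinearMap R (fun _ : ι => Π i, Matrix (n i) (n i) R)
      (Π f : ι → I, Matrix (Π k, n (f k)) (Π k, n (f k)) R) :=
  MultilinearMap.pi fun f => (Matrix.ofLinearEquiv R).toLinearMap.compMultilinearMap <|
    MultilinearMap.pi fun a => MultilinearMap.pi fun b =>
      (MultilinearMap.mkPiAlgebra R ι R).compLinearMap fun k =>
        Matrix.entryLinearMap R R (a k) (b k) ∘ₗ LinearMap.proj (f k)

variable {R ι n}

@[simp]
theorem piMatrixMultilinearMap_apply (x : ι → Π i, Matrix (n i) (n i) R) (f : ι → I)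
    (a b : Π k, n (f k)) :
    piMatrixMultilinearMap R ι n x f a b = ∏ k, x k (f k) (a k) (b k) := rfl

theorem piMatrixMultilinearMap_one [∀ i, DecidableEq (n i)] :
    piMatrixMultilinearMap R ι n 1 = 1 := by
  ext f a b
  simp [Matrix.one_apply, Finset.prod_ite_zero, funext_iff]

theorem piMatrixMultilinearMap_mul [DecidableEq ι] [∀ i, Fintype (n i)]
    (x y : ι → Π i, Matrix (n i) (n i) R) :
    piMatrixMultilinearMap R ι n (x * y) =
      piMatrixMultilinearMap R ι n x * piMatrixMultilinearMap R ι n y := by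
  ext f a b
  simp only [piMatrixMultilinearMap_apply, Pi.mul_apply, Matrix.mul_apply,
    Finset.prod_univ_sum, Fintype.piFinset_univ, Finset.prod_mul_distrib]

variable [DecidableEq ι] [∀ i, Fintype (n i)] [∀ i, DecidableEq (n i)]

variable (R ι n) in
noncomputable def piMatrixAlgHom :
    (⨂[R] _ : ι, Π i, Matrix (n i) (n i) R) →ₐ[R]
      Π f : ι → I, Matrix (Π k, n (f k)) (Π k, n (f k)) R :=
  liftAlgHom (piMatrixMultilinearMap R ι n) piMatrixMultilinearMap_one piMatrixMultilinearMap_mul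

variable [DecidableEq I]

theorem piMatrixAlgHom_tprod_single (g : ι → I) (a b : Π k, n (g k)) :
    piMatrixAlgHom R ι n (tprod R fun k => Pi.single (g k) (Matrix.single (a k) (b k) 1)) =
      Pi.single g (Matrix.single a b 1) := by
  ext f u v
  simp only [piMatrixAlgHom, liftAlgHom_apply, lift.tprod, piMatrixMultilinearMap_apply]
  by_cases hfg : f = g
  · subst hfg
    simp [Matrix.single_apply, Finset.prod_ite_zero, funext_iff, forall_and]
  · obtain ⟨k, hk⟩ := Function.ne_iff.mp hfg
    rw [Pi.single_eq_of_ne hfg]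
    exact Finset.prod_eq_zero (Finset.mem_univ k) (by simp [Pi.single_eq_of_ne hk])

variable [Fintype I]

/-- `piMatrixAlgHom` maps the product basis of matrix units bijectively onto the matrix units. -/
theorem piMatrixAlgHom_bijective : Function.Bijective (piMatrixAlgHom R ι n) := by
  let bD := Basis.piTensorProduct fun _ : ι => Pi.basis fun i => Matrix.stdBasis R (n i) (n i)
  let bE := Pi.basis fun f : ι → I => Matrix.stdBasis R (Π k, n (f k)) (Π k, n (f k))
  let σ := (Equiv.piSigmaEquivSigmaPi fun i => n i × n i).trans
    (Equiv.sigmaCongrRight fun f => Equiv.arrowProdEquivProdArrow ι _ _)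
  have h : (piMatrixAlgHom R ι n).toLinearMap = (bD.equiv bE σ).toLinearMap :=
    bD.ext fun r => by
      rw [LinearEquiv.coe_coe, Module.Basis.equiv_apply]
      simp only [bD, bE, Basis.piTensorProduct_apply, Pi.basis_apply, Matrix.stdBasis_apply]
      exact piMatrixAlgHom_tprod_single _ _ _
  rw [← AlgHom.coe_toLinearMap, h]
  exact (bD.equiv bE σ).bijective

variable (R ι n) in
noncomputable def piMatrixAlgEquiv :
    (⨂[R] _ : ι, Π i, Matrix (n i) (n i) R) ≃ₐ[R]
      Π f : ι → I, Matrix (Π k, n (f k)) (Π k, n (f k)) R :=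
  AlgEquiv.ofBijective _ piMatrixAlgHom_bijective

end PiTensorProduct

theorem matrix_sum_embeds_tensor_power_general (I : Type) [Fintype I] [Nonempty I]
    (d : I → ℕ) (hd : ∀ i, 2 ≤ d i) (p q : ℕ)
    (hpq : Nat.Coprime p q) :
    ∃ m : ℕ, 1 ≤ m ∧
      ∃ φ : (Matrix (Fin p) (Fin p) ℂ × Matrix (Fin q) (Fin q) ℂ) →ₐ[ℂ]
          ⨂[ℂ] _ : Fin m, ((i : I) → Matrix (Fin (d i)) (Fin (d i)) ℂ),
        Function.Injective φ := by
  classical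
  let m := p * q + 1
  have hcard (f : Fin m → I) : p * q < Fintype.card (Π k, Fin (d (f k))) :=
    calc p * q < 2 ^ m := (Nat.lt_two_pow_self).trans (Nat.pow_lt_pow_succ one_lt_two)
      _ ≤ ∏ k, d (f k) := by
        simpa using Finset.pow_card_le_prod Finset.univ (fun k => d (f k)) 2 fun k _ => hd (f k)
      _ = Fintype.card (Π k, Fin (d (f k))) := by simp
  choose χ hχ using fun f =>
    Matrix.exists_injective_algHom_prod_of_mul_lt_card (R := ℂ) hpq (hcard f)
  obtain ⟨i₀⟩ := ‹Nonempty I›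
  have hinj : Function.Injective (AlgHom.pi χ) :=
    fun X Y h => hχ (fun _ => i₀) (congr_fun h _)
  let Φ := (PiTensorProduct.piMatrixAlgEquiv ℂ (Fin m) fun i => Fin (d i)).symm
  exact ⟨m, Nat.le_add_left 1 _, Φ.toAlgHom.comp (AlgHom.pi χ), Φ.injective.comp hinj⟩

/-- Let `I` be a nonempty finite index set, `d : I → ℕ` with `d i ≥ 2` for
all `i`, and `D = Π i, M_{d i}(ℂ)` the corresponding finite direct sum of matrix
algebras. Then for any coprime `p, q ≥ 2` there is `m ≥ 1` and an injective unital
`ℂ`-algebra homomorphism from `M_p(ℂ) × M_q(ℂ)` into the `m`-fold tensor power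
`D^{⊗m}`. -/
theorem matrix_sum_embeds_tensor_power (I : Type) [Fintype I] [Nonempty I]
    (d : I → ℕ) (hd : ∀ i, 2 ≤ d i) (p q : ℕ) (hp : 2 ≤ p) (hq : 2 ≤ q)
    (hpq : Nat.Coprime p q) :
    ∃ m : ℕ, 1 ≤ m ∧
      ∃ φ : (Matrix (Fin p) (Fin p) ℂ × Matrix (Fin q) (Fin q) ℂ) →ₐ[ℂ]
          ⨂[ℂ] _ : Fin m, ((i : I) → Matrix (Fin (d i)) (Fin (d i)) ℂ),
        Function.Injective φ :=
  matrix_sum_embeds_tensor_power_general I d hd p q hpq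
end
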